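/- arXiv:1501.05362 — 6 statements merged into one kernel-verified Lean document; each statement's English description precedes it below -/
import Mathlib

section
/- For every real number D with 0 < D < 1, the value ζ(D) of the Riemann zeta function is real and strictly negative: Im(ζ(D)) = 0 and Re(ζ(D)) < 0. -/
/-!
Grouping consecutive terms of the alternating series `η(s) = ∑ (-1)^(n-1) n^(-s)` in pairs gives
terms of size `O(‖s‖ k^(-re s - 1))`, hence a holomorphic function on `0 < re s`. For `1 < re s`
it equals `(1 - 2^(1-s)) ζ(s)`, and by the identity theorem on the connected set
`{0 < re s} \ {1}` this persists there. For real `0 < x < 1` every pair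
`(2k+1)^(-x) - (2k+2)^(-x)` is positive, so `η(x) > 0`, while `1 - 2^(1-x) < 0`.
-/

open Complex Set

lemma norm_ofReal_cpow_neg_sub_le {a b : ℝ} (ha : 0 < a) (hab : a ≤ b) {s : ℂ}
    (hs : -1 ≤ s.re) :
    ‖(a : ℂ) ^ (-s) - (b : ℂ) ^ (-s)‖ ≤ ‖s‖ * a ^ (-s.re - 1) * (b - a) := by
  have hderiv : ∀ t ∈ Icc a b,
      HasDerivWithinAt (fun t : ℝ ↦ (t : ℂ) ^ (-s)) (-s * (t : ℂ) ^ (-s - 1)) (Icc a b) t :=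
    fun t ht ↦ by
    simpa using ((hasDerivAt_id (t : ℂ)).cpow_const (c := -s)
      (ofReal_mem_slitPlane.2 (ha.trans_le ht.1))).comp_ofReal.hasDerivWithinAt
  have hbound : ∀ t ∈ Ico a b, ‖-s * (t : ℂ) ^ (-s - 1)‖ ≤ ‖s‖ * a ^ (-s.re - 1) := by
    intro t ht
    rw [norm_mul, norm_neg, norm_cpow_eq_rpow_re_of_pos (ha.trans_le ht.1)]
    refine mul_le_mul_of_nonneg_left ?_ (norm_nonneg s)
    simp only [sub_re, neg_re, one_re]
    exact Real.rpow_le_rpow_of_nonpos ha ht.1 (by linarith)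
  rw [norm_sub_rev]
  exact norm_image_sub_le_of_norm_deriv_le_segment' hderiv hbound b (right_mem_Icc.2 hab)

lemma summable_rpow_two_mul_add_one {p : ℝ} (hp : p < -1) :
    Summable fun k : ℕ ↦ ((2 * k + 1 : ℕ) : ℝ) ^ p :=
  (Real.summable_nat_rpow.2 hp).comp_injective fun a b h ↦ by simpa using h

lemma isPreconnected_re_pos_diff_one : IsPreconnected ({s : ℂ | 0 < s.re} \ {1}) := by
  have hconvex (a b : ℝ) : Convex ℝ {s : ℂ | 0 < s.re ∧ a * s.re + b * s.im < 1} :=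
    (convex_halfSpace_re_gt 0).inter <|
      convex_halfSpace_lt (f := fun s : ℂ ↦ a * s.re + b * s.im)
        ⟨fun x y ↦ by simp only [add_re, add_im]; ring, fun c x ↦ by simp; ring⟩ 1
  have hset : {s : ℂ | 0 < s.re} \ {1} = ({s : ℂ | 0 < s.re ∧ 1 * s.re + -1 * s.im < 1} ∪
      {s : ℂ | 0 < s.re ∧ 1 * s.re + 1 * s.im < 1}) ∪ {s : ℂ | 1 < s.re} := by
    ext s
    simp only [mem_sdiff, mem_ofPred_eq, mem_singleton_iff, mem_union, Complex.ext_iff, one_re,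
      one_im]
    grind
  rw [hset]
  refine ((hconvex 1 (-1)).isPreconnected.union (1 / 2) ?_ ?_ (hconvex 1 1).isPreconnected).union
    (2 + 2 * I) ?_ ?_ (convex_halfSpace_re_gt 1).isPreconnected <;> simp <;> norm_num

noncomputable def dirichletEtaPair (s : ℂ) (k : ℕ) : ℂ :=
  ((2 * k + 1 : ℕ) : ℂ) ^ (-s) - ((2 * k + 2 : ℕ) : ℂ) ^ (-s)

/-- Grouped in pairs, the alternating series `∑ (-1)^(n-1) n^(-s)` converges absolutely
on `0 < re s`. -/
noncomputable def dirichletEta (s : ℂ) : ℂ := ∑' k, dirichletEtaPair s k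

lemma norm_dirichletEtaPair_le {s : ℂ} (hs : -1 ≤ s.re) (k : ℕ) :
    ‖dirichletEtaPair s k‖ ≤ ‖s‖ * ((2 * k + 1 : ℕ) : ℝ) ^ (-s.re - 1) := by
  have h := norm_ofReal_cpow_neg_sub_le (a := (2 * k + 1 : ℕ)) (b := (2 * k + 2 : ℕ))
    (by positivity) (by gcongr; omega) hs
  norm_num at h
  simpa [dirichletEtaPair] using h

lemma summable_dirichletEtaPair {s : ℂ} (hs : 0 < s.re) : Summable (dirichletEtaPair s) :=
  ((summable_rpow_two_mul_add_one (by linarith)).mul_left ‖s‖).of_norm_bounded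
    (norm_dirichletEtaPair_le (by linarith))

lemma differentiable_dirichletEtaPair (k : ℕ) : Differentiable ℂ (dirichletEtaPair · k) :=
  (differentiable_id.neg.const_cpow (Or.inl (Nat.cast_ne_zero.2 (by omega)))).sub
    (differentiable_id.neg.const_cpow (Or.inl (Nat.cast_ne_zero.2 (by omega))))

lemma differentiableOn_dirichletEta : DifferentiableOn ℂ dirichletEta {s | 0 < s.re} := by
  intro z hz
  set σ := z.re / 2
  set R := ‖z‖ + 1
  have hσ : 0 < σ := half_pos hz
  set U : Set ℂ := {s | σ < s.re} ∩ Metric.ball 0 R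
  have hU : IsOpen U := (isOpen_lt continuous_const continuous_re).inter Metric.isOpen_ball
  have hzU : z ∈ U := ⟨half_lt_self (α := ℝ) hz, by simp [R]⟩
  have hdiff : DifferentiableOn ℂ dirichletEta U := by
    refine differentiableOn_tsum_of_summable_norm
      ((summable_rpow_two_mul_add_one (p := -σ - 1) (by linarith)).mul_left R)
      (fun k ↦ (differentiable_dirichletEtaPair k).differentiableOn) hU fun k w hw ↦ ?_
    have hw₁ : σ < w.re := hw.1
    have hw₂ : ‖w‖ < R := by simpa using hw.2
    refine (norm_dirichletEtaPair_le (by linarith) k).trans ?_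
    gcongr
    exact_mod_cast Nat.le_add_left 1 (2 * k)
  exact (hdiff.differentiableAt (hU.mem_nhds hzU)).differentiableWithinAt

lemma dirichletEta_eq_of_one_lt_re {s : ℂ} (hs : 1 < s.re) :
    dirichletEta s = (1 - 2 ^ (1 - s)) * riemannZeta s := by
  set f : ℕ → ℂ := fun n ↦ 1 / ((n : ℂ) + 1) ^ s
  have hf : Summable f := by
    simpa [f] using (summable_nat_add_iff 1).2 (Complex.summable_one_div_nat_cpow.2 hs)
  have hζ : riemannZeta s = ∑' n, f n := zeta_eq_tsum_one_div_nat_add_one_cpow hs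
  have heven : Summable fun k ↦ f (2 * k) := hf.comp_injective fun a b h ↦ by omega
  have hodd : Summable fun k ↦ f (2 * k + 1) := hf.comp_injective fun a b h ↦ by omega
  have hf_odd (k : ℕ) : f (2 * k + 1) = 2 ^ (-s) * f k := by
    have := natCast_mul_natCast_cpow 2 (k + 1) s
    push_cast at this
    simp only [f, cpow_neg, one_div]
    push_cast
    rw [show (2 * (k : ℂ) + 1 + 1) = 2 * (k + 1) by ring, this, mul_inv]
  have hsplit : ∑' k, f (2 * k) + ∑' k, f (2 * k + 1) = riemannZeta s :=
    hζ ▸ tsum_even_add_odd heven hodd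
  have hodd_sum : ∑' k, f (2 * k + 1) = 2 ^ (-s) * riemannZeta s := by
    simp only [hf_odd, tsum_mul_left, hζ]
  have hpair (k : ℕ) : dirichletEtaPair s k = f (2 * k) - f (2 * k + 1) := by
    simp only [dirichletEtaPair, f, cpow_neg, one_div]
    push_cast
    ring_nf
  have htwo : (2 : ℂ) ^ (1 - s) = 2 * 2 ^ (-s) := by
    rw [sub_eq_add_neg, cpow_add _ _ two_ne_zero, cpow_one]
  rw [dirichletEta, tsum_congr hpair, heven.tsum_sub hodd, htwo]
  linear_combination hsplit - 2 * hodd_sum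

lemma dirichletEta_eq {s : ℂ} (hs : 0 < s.re) (hs1 : s ≠ 1) :
    dirichletEta s = (1 - 2 ^ (1 - s)) * riemannZeta s := by
  set U : Set ℂ := {s | 0 < s.re} \ {1}
  have hU : IsOpen U := (isOpen_lt continuous_const continuous_re).sdiff isClosed_singleton
  have hη : AnalyticOnNhd ℂ dirichletEta U :=
    (differentiableOn_dirichletEta.mono sdiff_subset).analyticOnNhd hU
  have hζ : AnalyticOnNhd ℂ (fun s ↦ (1 - 2 ^ (1 - s)) * riemannZeta s) U := by
    refine DifferentiableOn.analyticOnNhd (fun z hz ↦ ?_) hU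
    refine DifferentiableAt.differentiableWithinAt ?_
    exact ((differentiableAt_const _).sub
      (((differentiableAt_const _).sub differentiableAt_id).const_cpow (Or.inl two_ne_zero))).mul
      (differentiableAt_riemannZeta hz.2)
  have hev : dirichletEta =ᶠ[nhds 2] fun s ↦ (1 - 2 ^ (1 - s)) * riemannZeta s :=
    Filter.eventuallyEq_of_mem ((isOpen_lt continuous_const continuous_re).mem_nhds
      (by norm_num : (1 : ℝ) < (2 : ℂ).re)) fun z hz ↦ dirichletEta_eq_of_one_lt_re hz
  exact hη.eqOn_of_preconnected_of_eventuallyEq hζ isPreconnected_re_pos_diff_one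
    (by norm_num [U]) hev ⟨hs, hs1⟩

lemma dirichletEta_ofReal {x : ℝ} (hx : 0 < x) :
    (dirichletEta x).im = 0 ∧ 0 < (dirichletEta x).re := by
  set r : ℕ → ℝ := fun k ↦ ((2 * k + 1 : ℕ) : ℝ) ^ (-x) - ((2 * k + 2 : ℕ) : ℝ) ^ (-x)
  have hr : ∀ k, dirichletEtaPair x k = r k := fun k ↦ by
    simp only [dirichletEtaPair, r, ofReal_sub, ofReal_cpow (Nat.cast_nonneg _), ofReal_neg,
      ofReal_natCast]
  have hr_pos : ∀ k, 0 < r k := fun k ↦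
    sub_pos.2 (Real.rpow_lt_rpow_of_neg (by positivity) (by gcongr; omega) (by linarith))
  have hr_sum : Summable r :=
    summable_ofReal.1 <| (summable_dirichletEtaPair (s := x) (by simpa)).congr hr
  have hη : dirichletEta x = ↑(∑' k, r k) := by
    rw [dirichletEta, ofReal_tsum]
    exact tsum_congr hr
  rw [hη, ofReal_im, ofReal_re]
  exact ⟨rfl, hr_sum.tsum_pos (fun k ↦ (hr_pos k).le) 0 (hr_pos 0)⟩

/-- For every real `D` in the critical interval `(0, 1)`, the value `ζ(D)` of the
(meromorphically continued) Riemann zeta function is real and strictly negative. -/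
theorem riemannZeta_real_neg_on_critical_interval (D : ℝ) (hD0 : 0 < D) (hD1 : D < 1) :
    (riemannZeta (D : ℂ)).im = 0 ∧ (riemannZeta (D : ℂ)).re < 0 := by
  set c : ℝ := 1 - 2 ^ (1 - D)
  have hc : c < 0 := sub_neg.2 (Real.one_lt_rpow one_lt_two (by linarith))
  have hc_cast : (1 : ℂ) - 2 ^ (1 - (D : ℂ)) = c := by
    simp [c, ofReal_cpow zero_le_two]
  have hη := dirichletEta_eq (s := D) (by simpa) (by exact_mod_cast hD1.ne)
  rw [hc_cast] at hη
  have hζ : riemannZeta D = dirichletEta D / c := by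
    rw [hη, mul_div_cancel_left₀ _ (ofReal_ne_zero.2 hc.ne)]
  obtain ⟨him, hre⟩ := dirichletEta_ofReal hD0
  rw [hζ, div_ofReal_im, div_ofReal_re, him]
  exact ⟨zero_div c, div_neg_of_pos_of_neg hre hc⟩
end

section
/- Fix c ∈ ℝ and λ ∈ ℂ with Re(λ) = c. Then there exists a sequence (f_k) of locally absolutely continuous functions with f_k ∈ H_c, f_k′ ∈ H_c, ‖f_k‖_c = 1 for all k, and ‖f_k′ − λ f_k‖_c → 0 as k → ∞. Consequently, every point of the vertical line {Re(s) = c} belongs to the (approximate point) spectrum of the infinitesimal shift ∂ on H_c. -/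
/-!
Since `Re λ = c`, the weight `e^{-2ct}` exactly cancels `|e^{λt}|²`, so the Gaussian wave packets
`f_ε(t) = a_ε e^{λt - εt²/2}` have squared weighted norm `a_ε² √(π/ε)`, which fixes `a_ε`. Their defect
`f_ε' - λ f_ε = -ε t f_ε` has squared weighted norm `a_ε² ε² ∫ t² e^{-εt²} dt`, which by the
substitution `u = √ε t` is a constant multiple of `ε`, hence tends to `0` as `ε → 0`.
-/

open MeasureTheory Filter Topology intervalIntegral

/-- The weighted measure defining the Hilbert space `H_c = L²(ℝ, e^{−2ct} dt)`. -/
noncomputable def weightedMeasure (c : ℝ) : Measure ℝ :=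
  (volume : Measure ℝ).withDensity fun t => ENNReal.ofReal (Real.exp (-2 * c * t))

section WeightedNorm

variable {E : Type*} [NormedAddCommGroup E] {c : ℝ} {f : ℝ → E}

lemma eLpNorm_two_weightedMeasure (hf : AEStronglyMeasurable f)
    (hint : Integrable fun t => Real.exp (-2 * c * t) * ‖f t‖ ^ 2) :
    eLpNorm f 2 (weightedMeasure c) =
      ENNReal.ofReal √(∫ t, Real.exp (-2 * c * t) * ‖f t‖ ^ 2) := by
  have hw : Measurable fun t : ℝ => ENNReal.ofReal (Real.exp (-2 * c * t)) := by fun_prop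
  rw [eLpNorm_eq_lintegral_rpow_enorm_toReal two_ne_zero ENNReal.ofNat_ne_top, weightedMeasure,
    lintegral_withDensity_eq_lintegral_mul₀ hw.aemeasurable (by fun_prop),
    Real.sqrt_eq_rpow, ← ENNReal.ofReal_rpow_of_nonneg (integral_nonneg fun t => by positivity)
      (by norm_num), ofReal_integral_eq_lintegral_ofReal hint (ae_of_all _ fun t => by positivity)]
  congr 1
  refine lintegral_congr fun t => ?_
  simp only [Pi.mul_apply, ENNReal.toReal_ofNat, ← ofReal_norm]
  rw [ENNReal.ofReal_mul (by positivity), ENNReal.ofReal_rpow_of_nonneg (norm_nonneg _) (by norm_num)]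
  norm_cast

lemma memLp_two_weightedMeasure (hf : AEStronglyMeasurable f)
    (hint : Integrable fun t => Real.exp (-2 * c * t) * ‖f t‖ ^ 2) :
    MemLp f 2 (weightedMeasure c) :=
  ⟨hf.mono_ac (withDensity_absolutelyContinuous _ _), by
    rw [eLpNorm_two_weightedMeasure hf hint]; exact ENNReal.ofReal_lt_top⟩

end WeightedNorm

noncomputable def gaussianPacket (lam : ℂ) (ε t : ℝ) : ℂ :=
  Complex.exp (lam * t - ε * t ^ 2 / 2)

section GaussianPacket

variable (lam : ℂ) (ε : ℝ)

@[fun_prop]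
lemma continuous_gaussianPacket : Continuous (gaussianPacket lam ε) := by
  unfold gaussianPacket; fun_prop

lemma hasDerivAt_gaussianPacket (t : ℝ) :
    HasDerivAt (gaussianPacket lam ε) ((lam - ε * t) * gaussianPacket lam ε t) t := by
  have h : HasDerivAt (fun z : ℂ => lam * z - ε * z ^ 2 / 2) (lam - ε * t) t :=
    (((hasDerivAt_id _).const_mul lam).sub
      (((hasDerivAt_pow 2 _).const_mul (ε : ℂ)).div_const 2)).congr_deriv (by simp; ring)
  exact h.cexp.comp_ofReal.congr_deriv (mul_comm _ _)

lemma exp_mul_norm_sq_gaussianPacket (t : ℝ) :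
    Real.exp (-2 * lam.re * t) * ‖gaussianPacket lam ε t‖ ^ 2 = Real.exp (-ε * t ^ 2) := by
  rw [gaussianPacket, Complex.norm_exp, ← Real.exp_nat_mul, ← Real.exp_add]
  congr 1
  simp only [Complex.sub_re, Complex.mul_re, Complex.ofReal_re, Complex.ofReal_im]
  norm_num [← Complex.ofReal_pow]
  ring

end GaussianPacket

lemma integral_sq_mul_exp_neg_mul_sq {ε : ℝ} (hε : 0 < ε) :
    ∫ t, t ^ 2 * Real.exp (-ε * t ^ 2) = (∫ u, u ^ 2 * Real.exp (-u ^ 2)) / (ε * √ε) := by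
  have h := Measure.integral_comp_mul_left (fun u : ℝ => u ^ 2 * Real.exp (-u ^ 2)) √ε
  simp only [mul_pow, Real.sq_sqrt hε.le, smul_eq_mul, abs_inv,
    abs_of_pos (Real.sqrt_pos.2 hε), mul_assoc, MeasureTheory.integral_const_mul] at h
  simp only [neg_mul]
  rw [eq_div_iff (by positivity)]
  calc (∫ t, t ^ 2 * Real.exp (-(ε * t ^ 2))) * (ε * √ε)
      = √ε * (ε * ∫ t, t ^ 2 * Real.exp (-(ε * t ^ 2))) := by ring
    _ = _ := by rw [h, ← mul_assoc, mul_inv_cancel₀ (Real.sqrt_pos.2 hε).ne', one_mul]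

lemma exists_gaussian_quasimode (lam : ℂ) {ε : ℝ} (hε : 0 < ε) :
    ∃ f d : ℝ → ℂ, Continuous d ∧ (∀ t, HasDerivAt f (d t) t) ∧
      MemLp f 2 (weightedMeasure lam.re) ∧ MemLp d 2 (weightedMeasure lam.re) ∧
      eLpNorm f 2 (weightedMeasure lam.re) = 1 ∧
      eLpNorm (fun t => d t - lam * f t) 2 (weightedMeasure lam.re) =
        ENNReal.ofReal √(ε * (∫ u, u ^ 2 * Real.exp (-u ^ 2)) / √Real.pi) := by
  set g := gaussianPacket lam ε
  set a : ℝ := √(√ε / √Real.pi)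
  have ha : a ^ 2 = √ε / √Real.pi := Real.sq_sqrt (by positivity)
  have hweight_f (t : ℝ) : Real.exp (-2 * lam.re * t) * ‖(a : ℂ) * g t‖ ^ 2 =
      a ^ 2 * Real.exp (-ε * t ^ 2) := by
    rw [norm_mul, Complex.norm_real, Real.norm_eq_abs, mul_pow, sq_abs, mul_left_comm,
      exp_mul_norm_sq_gaussianPacket]
  have hweight_err (t : ℝ) : Real.exp (-2 * lam.re * t) * ‖((-(a * ε * t) : ℝ) : ℂ) * g t‖ ^ 2 =
      a ^ 2 * ε ^ 2 * (t ^ 2 * Real.exp (-ε * t ^ 2)) := by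
    rw [norm_mul, Complex.norm_real, Real.norm_eq_abs, mul_pow, sq_abs, mul_left_comm,
      exp_mul_norm_sq_gaussianPacket]
    ring
  have hint_f : Integrable fun t => a ^ 2 * Real.exp (-ε * t ^ 2) :=
    (integrable_exp_neg_mul_sq hε).const_mul _
  have hint_err : Integrable fun t => a ^ 2 * ε ^ 2 * (t ^ 2 * Real.exp (-ε * t ^ 2)) := by
    refine Integrable.const_mul ?_ _
    simpa only [Real.rpow_two] using integrable_rpow_mul_exp_neg_mul_sq hε (s := 2) (by norm_num)
  have herr : (fun t => (a : ℂ) * ((lam - ε * t) * g t) - lam * (a * g t)) =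
      fun t => ((-(a * ε * t) : ℝ) : ℂ) * g t := by
    funext t; push_cast; ring
  have hf_memLp : MemLp (fun t => (a : ℂ) * g t) 2 (weightedMeasure lam.re) :=
    memLp_two_weightedMeasure (by fun_prop) (by simpa only [hweight_f] using hint_f)
  have herr_memLp : MemLp (fun t => ((-(a * ε * t) : ℝ) : ℂ) * g t) 2 (weightedMeasure lam.re) :=
    memLp_two_weightedMeasure (by fun_prop) (by simpa only [hweight_err] using hint_err)
  refine ⟨fun t => a * g t, fun t => a * ((lam - ε * t) * g t), by fun_prop,
    fun t => (hasDerivAt_gaussianPacket lam ε t).const_mul _, hf_memLp, ?_, ?_, ?_⟩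
  · simpa only [← herr, Pi.add_def, sub_add_cancel] using
      herr_memLp.add (hf_memLp.const_mul lam)
  · rw [eLpNorm_two_weightedMeasure (by fun_prop) (by simpa only [hweight_f] using hint_f)]
    simp only [hweight_f, MeasureTheory.integral_const_mul, integral_gaussian, ha,
      Real.sqrt_div (by positivity : (0 : ℝ) ≤ Real.pi)]
    rw [div_mul_div_cancel₀', div_self, Real.sqrt_one, ENNReal.ofReal_one] <;> positivity
  · rw [herr, eLpNorm_two_weightedMeasure (by fun_prop) (by simpa only [hweight_err] using hint_err)]
    simp only [hweight_err, MeasureTheory.integral_const_mul, integral_sq_mul_exp_neg_mul_sq hε, ha]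
    congr 2
    field_simp

/-- **The vertical line `Re(s) = c` lies in the spectrum of the infinitesimal shift**
(part of Theorem 4.1): for every `λ` with `Re(λ) = c` there is a sequence of locally
absolutely continuous functions `f_k ∈ H_c` with a.e. derivatives `f_k′ ∈ H_c`,
`‖f_k‖_c = 1`, and `‖f_k′ − λ f_k‖_c → 0`; i.e. `λ` is an approximate eigenvalue of `∂`. -/
theorem infinitesimalShift_approx_spectrum (c : ℝ) (lam : ℂ) (hlam : lam.re = c) :
    ∃ f d : ℕ → ℝ → ℂ,
      (∀ k, MemLp (f k) 2 (weightedMeasure c)) ∧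
      (∀ k, MemLp (d k) 2 (weightedMeasure c)) ∧
      (∀ k, LocallyIntegrable (d k) (volume : Measure ℝ)) ∧
      (∀ k, ∀ x : ℝ, f k x = f k 0 + ∫ t in (0 : ℝ)..x, d k t) ∧
      (∀ k, eLpNorm (f k) 2 (weightedMeasure c) = 1) ∧
      Tendsto (fun k => eLpNorm (fun t => d k t - lam * f k t) 2 (weightedMeasure c))
        atTop (𝓝 0) := by
  subst hlam
  choose f d hd_cont hderiv hf hd hnorm herr using
    fun k : ℕ => exists_gaussian_quasimode lam (Nat.one_div_pos_of_nat (n := k))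
  refine ⟨f, d, hf, hd, fun k => (hd_cont k).locallyIntegrable, fun k x => ?_, hnorm, ?_⟩
  · rw [integral_eq_sub_of_hasDerivAt (fun t _ => hderiv k t) ((hd_cont k).intervalIntegrable 0 x),
      add_sub_cancel]
  · simp only [herr]
    have hε : Tendsto (fun k : ℕ => 1 / ((k : ℝ) + 1)) atTop (𝓝 0) :=
      tendsto_one_div_add_atTop_nhds_zero_nat
    simpa only [zero_mul, zero_div, Real.sqrt_zero, ENNReal.ofReal_zero] using
      ENNReal.tendsto_ofReal ((hε.mul_const _).div_const _).sqrt
end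

section
/- Fix c > 1. For each integer n ≥ 1, the translation operator T_{log n} is bounded on H_c with operator norm n^{−c}, and the series A := ∑_{n=1}^∞ T_{log n} converges absolutely in the operator norm of bounded operators on H_c, defining a bounded linear operator A with ‖A‖ ≤ ζ(c); explicitly, (A f)(t) = ∑_{n=1}^∞ f(t − log n) for f ∈ H_c. -/
/-!
Under `t ↦ t - h` the weight `e^{-2ct}` picks up the constant factor `e^{-2ch}`, so every
translation is a homothety of `H_c` with ratio `e^{-ch}`, which is `n^{-c}` at `h = log n`.
The operator norms are thus summable for `c > 1`, with sum `ζ(c)`; and a series converging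
absolutely in `L²` converges pointwise a.e. to its sum, which gives the formula for `A f`.
-/

open MeasureTheory Filter

open scoped ENNReal

theorem MeasureTheory.Lp.nontrivial_of_measure_ne_zero {α E : Type*} [MeasurableSpace α]
    {μ : Measure α} [NormedAddCommGroup E] [Nontrivial E] {p : ℝ≥0∞} (hp : p ≠ 0)
    {s : Set α} (hs : MeasurableSet s) (hμs₀ : μ s ≠ 0) (hμs : μ s ≠ ∞) :
    Nontrivial (Lp E p μ) := by
  obtain ⟨x, hx⟩ := exists_ne (0 : E)
  refine nontrivial_of_ne (indicatorConstLp p hs hμs x) 0 fun h => ?_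
  have hpos : 0 < ‖indicatorConstLp p hs hμs x‖ := by
    have := ENNReal.toReal_pos hμs₀ hμs
    have := norm_pos_iff.2 hx
    rw [norm_indicatorConstLp' hp hμs₀]
    positivity
  simp [h] at hpos

section weightedMeasure

variable (c : ℝ)

instance : IsLocallyFiniteMeasure (weightedMeasure c) :=
  IsLocallyFiniteMeasure.withDensity_ofReal (by fun_prop)

theorem volume_absolutelyContinuous_weightedMeasure : volume ≪ weightedMeasure c :=
  withDensity_absolutelyContinuous' (by fun_prop) (.of_forall fun _ => by positivity)

instance {E : Type*} [NormedAddCommGroup E] [Nontrivial E] {p : ℝ≥0∞} [Fact (1 ≤ p)] :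
    Nontrivial (Lp E p (weightedMeasure c)) :=
  Lp.nontrivial_of_measure_ne_zero (s := Set.Icc 0 1) (zero_lt_one.trans_le Fact.out).ne'
    measurableSet_Icc (fun h => by simpa using volume_absolutelyContinuous_weightedMeasure c h)
    isCompact_Icc.measure_lt_top.ne

theorem lintegral_weightedMeasure (g : ℝ → ℝ≥0∞) :
    ∫⁻ t, g t ∂weightedMeasure c = ∫⁻ t, ENNReal.ofReal (Real.exp (-2 * c * t)) * g t :=
  lintegral_withDensity_eq_lintegral_mul_non_measurable _ (by fun_prop)
    (.of_forall fun _ => ENNReal.ofReal_lt_top) g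

theorem lintegral_comp_sub_right_weightedMeasure (h : ℝ) (g : ℝ → ℝ≥0∞) :
    ∫⁻ t, g (t - h) ∂weightedMeasure c
      = ENNReal.ofReal (Real.exp (-2 * c * h)) * ∫⁻ t, g t ∂weightedMeasure c := by
  rw [lintegral_weightedMeasure, lintegral_weightedMeasure,
    ← lintegral_const_mul' _ _ ENNReal.ofReal_ne_top, ← lintegral_add_right_eq_self _ h]
  congr 1 with t
  rw [add_sub_cancel_right, ← mul_assoc, ← ENNReal.ofReal_mul (Real.exp_pos _).le,
    ← Real.exp_add]
  ring_nf

theorem eLpNorm_comp_sub_right_weightedMeasure {E : Type*} [NormedAddCommGroup E] (h : ℝ)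
    (g : ℝ → E) :
    eLpNorm (fun t => g (t - h)) 2 (weightedMeasure c)
      = ENNReal.ofReal (Real.exp (-(c * h))) * eLpNorm g 2 (weightedMeasure c) := by
  simp only [eLpNorm_eq_lintegral_rpow_enorm_toReal two_ne_zero ENNReal.ofNat_ne_top]
  rw [lintegral_comp_sub_right_weightedMeasure (g := fun t => ‖g t‖ₑ ^ _),
    ENNReal.mul_rpow_of_nonneg _ _ (by positivity), ENNReal.ofReal_rpow_of_pos (Real.exp_pos _),
    ← Real.exp_mul]
  norm_num
  ring_nf

end weightedMeasure

theorem norm_of_coeFn_ae_eq_comp_sub_right {E : Type*} [NormedAddCommGroup E] {c h : ℝ}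
    {f g : Lp E 2 (weightedMeasure c)}
    (hfg : (g : ℝ → E) =ᵐ[weightedMeasure c] fun t => f (t - h)) :
    ‖g‖ = Real.exp (-(c * h)) * ‖f‖ := by
  rw [Lp.norm_def, Lp.norm_def, eLpNorm_congr_ae hfg, eLpNorm_comp_sub_right_weightedMeasure,
    ENNReal.toReal_mul, ENNReal.toReal_ofReal (Real.exp_pos _).le]

theorem opNorm_of_coeFn_ae_eq_comp_sub_right {𝕜 E : Type*} [NontriviallyNormedField 𝕜]
    [NormedAddCommGroup E] [NormedSpace 𝕜 E] [Nontrivial E] {c h : ℝ}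
    {T : Lp E 2 (weightedMeasure c) →L[𝕜] Lp E 2 (weightedMeasure c)}
    (hT : ∀ f, (T f : ℝ → E) =ᵐ[weightedMeasure c] fun t => f (t - h)) :
    ‖T‖ = Real.exp (-(c * h)) :=
  T.homothety_norm fun f => norm_of_coeFn_ae_eq_comp_sub_right (hT f)

theorem Real.exp_neg_mul_log {x : ℝ} (hx : 0 < x) (c : ℝ) :
    Real.exp (-(c * Real.log x)) = x ^ (-c) := by
  rw [Real.rpow_def_of_pos hx]
  ring_nf

theorem summable_nat_add_one_rpow_neg {c : ℝ} (hc : 1 < c) :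
    Summable fun n : ℕ => ((n : ℝ) + 1) ^ (-c) := by
  simpa using (summable_nat_add_iff 1).2 (Real.summable_nat_rpow.2 (by linarith : -c < -1))

theorem riemannZeta_re_eq_tsum {c : ℝ} (hc : 1 < c) :
    (riemannZeta c).re = ∑' n : ℕ, ((n : ℝ) + 1) ^ (-c) := by
  have hterm (n : ℕ) : 1 / ((n : ℂ) + 1) ^ (c : ℂ) = (((n : ℝ) + 1) ^ (-c) : ℝ) := by
    rw [Real.rpow_neg (by positivity), Complex.ofReal_inv, Complex.ofReal_cpow (by positivity),
      one_div]
    push_cast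
    rfl
  rw [zeta_eq_tsum_one_div_nat_add_one_cpow (by simpa using hc), tsum_congr hterm,
    ← Complex.ofReal_tsum, Complex.ofReal_re]

/-- **Quantized Dirichlet series for the spectral operator** (Theorem 4.5): for `c > 1`,
given the translation operators `T_h` on `H_c` (characterized by `(T_h f)(t) = f(t − h)`
a.e.), each `T_{log n}` has operator norm `n^{−c}`, the series `A = ∑_{n≥1} T_{log n}`
converges absolutely in operator norm with `‖A‖ ≤ ζ(c)`, and
`(A f)(t) = ∑_{n≥1} f(t − log n)` a.e., for every `f ∈ H_c`. -/
theorem quantized_dirichlet_series (c : ℝ) (hc : 1 < c)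
    (T : ℝ → Lp ℂ 2 (weightedMeasure c) →L[ℂ] Lp ℂ 2 (weightedMeasure c))
    (hT : ∀ (h : ℝ) (f : Lp ℂ 2 (weightedMeasure c)),
      (T h f : ℝ → ℂ) =ᵐ[weightedMeasure c] fun t => f (t - h)) :
    (∀ n : ℕ, ‖T (Real.log (n + 1))‖ = ((n : ℝ) + 1) ^ (-c)) ∧
    Summable (fun n : ℕ => ‖T (Real.log (n + 1))‖) ∧
    Summable (fun n : ℕ => T (Real.log (n + 1))) ∧
    ‖∑' n : ℕ, T (Real.log (n + 1))‖ ≤ (riemannZeta (c : ℂ)).re ∧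
    ∀ f : Lp ℂ 2 (weightedMeasure c),
      ((∑' n : ℕ, T (Real.log (n + 1))) f : ℝ → ℂ) =ᵐ[weightedMeasure c]
        fun t => ∑' n : ℕ, f (t - Real.log (n + 1)) := by
  have hnorm (n : ℕ) : ‖T (Real.log (n + 1))‖ = ((n : ℝ) + 1) ^ (-c) := by
    rw [opNorm_of_coeFn_ae_eq_comp_sub_right (hT _), Real.exp_neg_mul_log (by positivity)]
  have hsum : Summable fun n : ℕ => ‖T (Real.log (n + 1))‖ := by
    simpa only [hnorm] using summable_nat_add_one_rpow_neg hc
  refine ⟨hnorm, hsum, hsum.of_norm, ?_, fun f => ?_⟩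
  · calc ‖∑' n : ℕ, T (Real.log (n + 1))‖ ≤ ∑' n : ℕ, ‖T (Real.log (n + 1))‖ :=
          norm_tsum_le_tsum_norm hsum
      _ = (riemannZeta c).re := by rw [tsum_congr hnorm, riemannZeta_re_eq_tsum hc]
  · have hfsum : ∑' n : ℕ, ‖T (Real.log (n + 1)) f‖ₑ ≠ ∞ :=
      tsum_enorm_ne_top_iff_summable_norm.2 <| (hsum.mul_right ‖f‖).of_nonneg_of_le
        (fun _ => norm_nonneg _) fun n => (T _).le_opNorm f
    have happly : (∑' n : ℕ, T (Real.log (n + 1))) f = ∑' n : ℕ, T (Real.log (n + 1)) f :=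
      (ContinuousLinearMap.apply ℂ _ f).map_tsum hsum.of_norm
    rw [happly]
    filter_upwards [Lp.coeFn_tsum hfsum, ae_all_iff.2 fun n : ℕ => hT (Real.log (n + 1)) f]
      with t ht hTt
    rw [ht]
    exact tsum_congr hTt
end

section
/- Fix c > 1. For each prime p, the series E_p := ∑_{m=0}^∞ T_{m log p} converges in operator norm on H_c and satisfies E_p = (I − T_{log p})^{−1}; moreover, if p_1 < p_2 < p_3 < ⋯ is the increasing enumeration of the primes, then the finite products E_{p_1} ∘ E_{p_2} ∘ ⋯ ∘ E_{p_k} converge in operator norm, as k → ∞, to the operator A = ∑_{n=1}^∞ T_{log n}. -/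
open MeasureTheory Filter Topology

/-!
Translating by `h` multiplies the weight `e^{-2ct}` by `e^{-2ch}`, so `‖T_h‖ ≤ e^{-ch}`, and
`h ↦ T_h` is a homomorphism from `(ℝ, +)`. Hence `n ↦ T_{log n}` is a completely
multiplicative family of pairwise commuting operators with `‖T_{log n}‖ ≤ n^{-c}`, absolutely
summable for `c > 1`. The local factors are geometric series in `T_{log p}`, which has norm
`< 1`, and the Euler product is the classical one for multiplicative sequences in a commutative
Banach ring, applied in the double commutant of these operators: a closed commutative subring.
-/

theorem map_sub_const_weightedMeasure (c h : ℝ) :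
    (weightedMeasure c).map (· - h)
      = ENNReal.ofReal (Real.exp (-2 * c * h)) • weightedMeasure c := by
  set w : ℝ → ENNReal := fun t => ENNReal.ofReal (Real.exp (-2 * c * t))
  have hw : Measurable w := by fun_prop
  have hw_shift (t : ℝ) : w t = w h * w (t - h) := by
    simp only [w]
    rw [← ENNReal.ofReal_mul (Real.exp_nonneg _), ← Real.exp_add]
    ring_nf
  ext s hs
  rw [Measure.map_apply (by fun_prop) hs, Measure.smul_apply, smul_eq_mul, weightedMeasure,
    withDensity_apply _ (measurable_sub_const h hs), withDensity_apply _ hs,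
    lintegral_congr hw_shift, lintegral_const_mul _ (by fun_prop),
    (measurePreserving_sub_right volume h).setLIntegral_comp_preimage hs hw]

theorem quasiMeasurePreserving_sub_const_weightedMeasure (c h : ℝ) :
    Measure.QuasiMeasurePreserving (· - h) (weightedMeasure c) (weightedMeasure c) :=
  ⟨measurable_sub_const h,
    (map_sub_const_weightedMeasure c h).symm ▸ Measure.smul_absolutelyContinuous⟩

theorem eLpNorm_comp_sub_const_weightedMeasure {c : ℝ} {E : Type*} [NormedAddCommGroup E]
    {p : ENNReal} (hp : p ≠ ⊤) {f : ℝ → E} (hf : AEStronglyMeasurable f (weightedMeasure c))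
    (h : ℝ) :
    eLpNorm (fun t => f (t - h)) p (weightedMeasure c)
      = ENNReal.ofReal (Real.exp (-2 * c * h)) ^ (1 / p).toReal
        * eLpNorm f p (weightedMeasure c) := by
  rw [← smul_eq_mul, ← eLpNorm_smul_measure_of_ne_top hp, ← map_sub_const_weightedMeasure,
    eLpNorm_map_measure]
  · rfl
  · rw [map_sub_const_weightedMeasure]; exact hf.smul_measure _
  · exact (measurable_sub_const h).aemeasurable

section TranslationFamily

variable {𝕜 E : Type*} [NontriviallyNormedField 𝕜] [NormedAddCommGroup E] [NormedSpace 𝕜 E]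
  {c : ℝ}

def IsTranslationFamily
    (T : ℝ → Lp E 2 (weightedMeasure c) →L[𝕜] Lp E 2 (weightedMeasure c)) : Prop :=
  ∀ (h : ℝ) (f : Lp E 2 (weightedMeasure c)),
    (T h f : ℝ → E) =ᵐ[weightedMeasure c] fun t => f (t - h)

namespace IsTranslationFamily

variable {T : ℝ → Lp E 2 (weightedMeasure c) →L[𝕜] Lp E 2 (weightedMeasure c)}
  (hT : IsTranslationFamily T)
include hT

theorem map_add (a b : ℝ) : T (a + b) = T a * T b := by
  ext f
  refine (hT (a + b) f).trans (EventuallyEq.trans ?_ (hT a (T b f)).symm)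
  have := (hT b f).comp_tendsto (quasiMeasurePreserving_sub_const_weightedMeasure c a).tendsto_ae
  refine EventuallyEq.trans (Eventually.of_forall fun t => ?_) this.symm
  simp [sub_sub, add_comm a b]

theorem map_zero : T 0 = 1 := by
  ext f
  simpa using hT 0 f

theorem norm_apply (h : ℝ) (f : Lp E 2 (weightedMeasure c)) :
    ‖T h f‖ = Real.exp (-(c * h)) * ‖f‖ := by
  have hfactor : (ENNReal.ofReal (Real.exp (-2 * c * h)) ^ (1 / 2 : ENNReal).toReal).toReal
      = Real.exp (-(c * h)) := by
    rw [← ENNReal.toReal_rpow, ENNReal.toReal_ofReal (Real.exp_nonneg _), ← Real.exp_mul]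
    norm_num
    ring_nf
  rw [Lp.norm_def, Lp.norm_def, eLpNorm_congr_ae (hT h f),
    eLpNorm_comp_sub_const_weightedMeasure (by norm_num) (Lp.aestronglyMeasurable f),
    ENNReal.toReal_mul, hfactor]

theorem norm_le (h : ℝ) : ‖T h‖ ≤ Real.exp (-(c * h)) :=
  ContinuousLinearMap.opNorm_le_bound _ (Real.exp_nonneg _) fun f => (hT.norm_apply h f).le

end IsTranslationFamily

end TranslationFamily

theorem Nat.prod_primesBelow_nth_prime {M : Type*} [CommMonoid M] (g : ℕ → M) (k : ℕ) :
    ∏ p ∈ (nth Nat.Prime k).primesBelow, g p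
      = ((List.range k).map fun i => g (nth Nat.Prime i)).prod := by
  induction k with
  | zero => simp [nth_prime_zero_eq_two]
  | succ k ih =>
    rw [primesBelow, filter_range_nth_eq_insert_of_infinite infinite_setOfPred_prime,
      Finset.prod_insert (by simp), ← primesBelow, ih, List.range_succ, List.map_append,
      List.prod_append, mul_comm]
    simp

theorem tendsto_prod_tsum_nth_prime_of_commute {R : Type*} [NormedRing R] [CompleteSpace R]
    {f : ℕ → R} (hcomm : ∀ m n, Commute (f m) (f n)) (hf₁ : f 1 = 1)
    (hmul : ∀ {m n}, Nat.Coprime m n → f (m * n) = f m * f n) (hsum : Summable (‖f ·‖))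
    (hf₀ : f 0 = 0) :
    Tendsto (fun k => ((List.range k).map fun i => ∑' e, f (Nat.nth Nat.Prime i ^ e)).prod) atTop
      (𝓝 (∑' n, f n)) := by
  let S := Subring.centralizer (Set.centralizer (Set.range f))
  let _ : NormedCommRing S := { SubringClass.toNormedRing S with
    mul_comm := fun x y => Subtype.ext <| Set.centralizer_centralizer_comm_of_comm
      (by rintro _ ⟨m, rfl⟩ _ ⟨n, rfl⟩; exact hcomm m n) _ x.2 _ y.2 }
  have : CompleteSpace S := (Set.isClosed_centralizer _).completeSpace_coe
  let g : ℕ → S := fun n => ⟨f n, Set.subset_centralizer_centralizer ⟨n, rfl⟩⟩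
  have hgsum : Summable (‖g ·‖) := hsum
  have hEuler := (EulerProduct.eulerProduct (f := g) (Subtype.ext hf₁)
    (fun h => Subtype.ext (hmul h)) hgsum (Subtype.ext hf₀)).comp
    (Nat.nth_strictMono Nat.infinite_setOfPred_prime).tendsto_atTop
  have hfactor (i : ℕ) :
      S.subtype (∑' e, g (Nat.nth Nat.Prime i ^ e)) = ∑' e, f (Nat.nth Nat.Prime i ^ e) :=
    Summable.map_tsum ((hgsum.comp_injective
      (Nat.pow_right_injective (Nat.prime_nth_prime i).two_le)).of_norm) _ continuous_subtype_val
  convert (continuous_subtype_val.tendsto _).comp hEuler using 1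
  · ext k
    simp only [Function.comp_apply, Nat.prod_primesBelow_nth_prime]
    rw [← Subring.coe_subtype, map_list_prod, List.map_map]
    simp only [Function.comp_def, hfactor]
  · exact congrArg 𝓝 (Summable.map_tsum hgsum.of_norm S.subtype continuous_subtype_val).symm

section ExpDecaySemigroup

variable {A : Type*} [NormedRing A] {T : ℝ → A}

theorem map_natCast_mul_of_map_add (hadd : ∀ a b, T (a + b) = T a * T b) (hzero : T 0 = 1)
    (x : ℝ) (m : ℕ) : T (m * x) = T x ^ m := by
  induction m with
  | zero => simpa using hzero
  | succ m ih => rw [pow_succ, ← ih, ← hadd]; push_cast; ring_nf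

theorem norm_lt_one_of_norm_le_exp {c x : ℝ} (hnorm : ∀ h, ‖T h‖ ≤ Real.exp (-(c * h)))
    (hc : 0 < c) (hx : 0 < x) : ‖T x‖ < 1 :=
  (hnorm x).trans_lt (Real.exp_lt_one_iff.mpr (by nlinarith))

-- The operator `n^{-∂}` of the paper for `n ≠ 0`; the junk value `0` at `n = 0` is the
-- convention of `EulerProduct`.
noncomputable def logCoeff (T : ℝ → A) (n : ℕ) : A :=
  if n = 0 then 0 else T (Real.log n)

@[simp]
theorem logCoeff_zero : logCoeff T 0 = 0 := if_pos rfl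

theorem logCoeff_of_ne_zero {n : ℕ} (hn : n ≠ 0) : logCoeff T n = T (Real.log n) := if_neg hn

theorem logCoeff_succ (n : ℕ) : logCoeff T (n + 1) = T (Real.log (n + 1)) := by
  rw [logCoeff_of_ne_zero n.succ_ne_zero]; push_cast; rfl

theorem logCoeff_one (hzero : T 0 = 1) : logCoeff T 1 = 1 := by
  simpa [logCoeff_of_ne_zero] using hzero

theorem logCoeff_pow {p : ℕ} (hp : p ≠ 0) (e : ℕ) :
    logCoeff T (p ^ e) = T (e * Real.log p) := by
  rw [logCoeff_of_ne_zero (pow_ne_zero e hp), Nat.cast_pow, Real.log_pow]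

theorem logCoeff_mul (hadd : ∀ a b, T (a + b) = T a * T b) (m n : ℕ) :
    logCoeff T (m * n) = logCoeff T m * logCoeff T n := by
  rcases eq_or_ne m 0 with rfl | hm
  · simp
  rcases eq_or_ne n 0 with rfl | hn
  · simp
  rw [logCoeff_of_ne_zero hm, logCoeff_of_ne_zero hn, logCoeff_of_ne_zero (mul_ne_zero hm hn),
    Nat.cast_mul, Real.log_mul (by exact_mod_cast hm) (by exact_mod_cast hn), hadd]

theorem logCoeff_commute (hadd : ∀ a b, T (a + b) = T a * T b) (m n : ℕ) :
    Commute (logCoeff T m) (logCoeff T n) := by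
  rw [Commute, SemiconjBy, ← logCoeff_mul hadd, ← logCoeff_mul hadd, mul_comm]

theorem norm_logCoeff_le {c : ℝ} (hnorm : ∀ h, ‖T h‖ ≤ Real.exp (-(c * h))) (n : ℕ) :
    ‖logCoeff T n‖ ≤ (n : ℝ) ^ (-c) := by
  rcases eq_or_ne n 0 with rfl | hn
  · simpa using Real.rpow_nonneg le_rfl _
  have hn' : (0 : ℝ) < n := by exact_mod_cast hn.bot_lt
  rw [logCoeff_of_ne_zero hn, Real.rpow_def_of_pos hn', mul_comm, neg_mul]
  exact hnorm (Real.log n)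

theorem summable_norm_logCoeff {c : ℝ} (hnorm : ∀ h, ‖T h‖ ≤ Real.exp (-(c * h)))
    (hc : 1 < c) : Summable (‖logCoeff T ·‖) :=
  (Real.summable_nat_rpow.mpr (neg_lt_neg hc)).of_nonneg_of_le (fun _ => norm_nonneg _)
    (norm_logCoeff_le hnorm)

theorem summable_map_log_succ [CompleteSpace A] {c : ℝ}
    (hnorm : ∀ h, ‖T h‖ ≤ Real.exp (-(c * h))) (hc : 1 < c) :
    Summable fun n : ℕ => T (Real.log (n + 1)) := by
  simpa only [logCoeff_succ] using
    (summable_nat_add_iff 1).mpr (summable_norm_logCoeff hnorm hc).of_norm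

theorem tendsto_prod_tsum_nth_prime_of_map_add [CompleteSpace A] {c : ℝ}
    (hadd : ∀ a b, T (a + b) = T a * T b) (hzero : T 0 = 1)
    (hnorm : ∀ h, ‖T h‖ ≤ Real.exp (-(c * h))) (hc : 1 < c) :
    Tendsto (fun k => ((List.range k).map fun i =>
        ∑' m : ℕ, T (m * Real.log (Nat.nth Nat.Prime i))).prod) atTop
      (𝓝 (∑' n : ℕ, T (Real.log (n + 1)))) := by
  have hsum := summable_norm_logCoeff hnorm hc
  have := tendsto_prod_tsum_nth_prime_of_commute (logCoeff_commute hadd) (logCoeff_one hzero)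
    (fun _ => logCoeff_mul hadd _ _) hsum logCoeff_zero
  simpa only [logCoeff_pow (Nat.prime_nth_prime _).ne_zero, hsum.of_norm.tsum_eq_zero_add,
    logCoeff_zero, zero_add, logCoeff_succ] using this

end ExpDecaySemigroup

/-- **Quantized Euler product for the spectral operator** (Theorem 4.5): for `c > 1`,
given the translation operators `T_h` on `H_c` (characterized by `(T_h f)(t) = f(t − h)`
a.e.), for each prime `p` the local Euler factor `E_p = ∑_{m≥0} T_{m log p}` converges in
operator norm and equals `(I − T_{log p})^{−1}`; moreover the partial products
`E_{p_1} ∘ ⋯ ∘ E_{p_k}` over the primes in increasing order converge in operator norm to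
`A = ∑_{n≥1} T_{log n}`. -/
theorem quantized_euler_product (c : ℝ) (hc : 1 < c)
    (T : ℝ → Lp ℂ 2 (weightedMeasure c) →L[ℂ] Lp ℂ 2 (weightedMeasure c))
    (hT : ∀ (h : ℝ) (f : Lp ℂ 2 (weightedMeasure c)),
      (T h f : ℝ → ℂ) =ᵐ[weightedMeasure c] fun t => f (t - h)) :
    (∀ p : ℕ, p.Prime → Summable (fun m : ℕ => T ((m : ℝ) * Real.log p))) ∧
    (∀ p : ℕ, p.Prime →
      (1 - T (Real.log p)) * (∑' m : ℕ, T ((m : ℝ) * Real.log p)) = 1 ∧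
      (∑' m : ℕ, T ((m : ℝ) * Real.log p)) * (1 - T (Real.log p)) = 1) ∧
    Summable (fun n : ℕ => T (Real.log (n + 1))) ∧
    Tendsto
      (fun k : ℕ =>
        ((List.range k).map fun i =>
          ∑' m : ℕ, T ((m : ℝ) * Real.log (Nat.nth Nat.Prime i))).prod)
      atTop (𝓝 (∑' n : ℕ, T (Real.log (n + 1)))) := by
  have hadd : ∀ a b, T (a + b) = T a * T b := IsTranslationFamily.map_add hT
  have hzero : T 0 = 1 := IsTranslationFamily.map_zero hT
  have hnorm : ∀ h, ‖T h‖ ≤ Real.exp (-(c * h)) := IsTranslationFamily.norm_le hT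
  have hgeom (p : ℕ) : (fun m : ℕ => T (m * Real.log p)) = fun m => T (Real.log p) ^ m :=
    funext (map_natCast_mul_of_map_add hadd hzero _)
  have hlt (p : ℕ) (hp : p.Prime) : ‖T (Real.log p)‖ < 1 :=
    norm_lt_one_of_norm_le_exp hnorm (by linarith) (Real.log_pos (by exact_mod_cast hp.one_lt))
  refine ⟨fun p hp => ?_, fun p hp => ?_, summable_map_log_succ hnorm hc,
    tendsto_prod_tsum_nth_prime_of_map_add hadd hzero hnorm hc⟩
  · rw [hgeom p]
    exact summable_geometric_of_norm_lt_one (hlt p hp)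
  · rw [hgeom p]
    exact ⟨mul_neg_geom_series _ (hlt p hp), geom_series_mul_neg _ (hlt p hp)⟩
end

section
/- Fix c > 1. The series B := ∑_{n=1}^∞ μ(n) T_{log n} converges absolutely in operator norm on H_c, where μ is the Möbius function, and B is a two-sided inverse of A = ∑_{n=1}^∞ T_{log n}: A ∘ B = B ∘ A = I on H_c. In particular, the spectral operator is invertible for c > 1 with inverse ∑_{n=1}^∞ μ(n) n^{−∂}. -/
set_option maxHeartbeats 1000000


open MeasureTheory Filter

namespace SpectralAux

noncomputable def w (c : ℝ) : ℝ → ENNReal := fun t => ENNReal.ofReal (Real.exp (-2 * c * t))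

lemma w_meas (c : ℝ) : Measurable (w c) :=
  (Real.measurable_exp.comp ((measurable_const.mul measurable_id))).ennreal_ofReal

lemma w_add (c t h : ℝ) : w c (t + h) = ENNReal.ofReal (Real.exp (-2 * c * h)) * w c t := by
  simp only [w, ← ENNReal.ofReal_mul (Real.exp_pos _).le, ← Real.exp_add]
  ring_nf

lemma meas_sub (h : ℝ) : Measurable (fun t : ℝ => t - h) :=
  measurable_id.sub measurable_const

/-- Translation by `h` scales the weighted measure by `e^{-2ch}`. -/
lemma mp (c h : ℝ) : MeasurePreserving (fun t : ℝ => t - h) (weightedMeasure c)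
    (ENNReal.ofReal (Real.exp (-2 * c * h)) • weightedMeasure c) := by
  refine ⟨meas_sub h, ?_⟩
  refine Measure.ext fun A hA => ?_
  have hA' : MeasurableSet ((fun t : ℝ => t - h) ⁻¹' A) := meas_sub h hA
  rw [Measure.map_apply (meas_sub h) hA, Measure.smul_apply, smul_eq_mul]
  show (volume.withDensity (w c)) _ = _ * (volume.withDensity (w c)) A
  rw [withDensity_apply _ hA', withDensity_apply _ hA,
    ← lintegral_indicator hA' _, ← lintegral_indicator hA _]
  set F := Set.indicator ((fun t : ℝ => t - h) ⁻¹' A) (w c) with hF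
  have hFmeas : Measurable F := (w_meas c).indicator hA'
  have key := (measurePreserving_add_right (volume : Measure ℝ) h).lintegral_comp hFmeas
  rw [← key]
  have : ∀ x : ℝ, F (x + h) =
      ENNReal.ofReal (Real.exp (-2 * c * h)) * Set.indicator A (w c) x := by
    intro x
    by_cases hx : x ∈ A
    · have : x + h ∈ (fun t : ℝ => t - h) ⁻¹' A := by simpa using hx
      rw [hF, Set.indicator_of_mem this, Set.indicator_of_mem hx, w_add]
    · have : x + h ∉ (fun t : ℝ => t - h) ⁻¹' A := by simpa using hx
      rw [hF, Set.indicator_of_notMem this, Set.indicator_of_notMem hx, mul_zero]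
  simp only [this]
  rw [lintegral_const_mul _ ((w_meas c).indicator hA)]

variable {c : ℝ}

lemma vol_ac : (volume : Measure ℝ) ≪ weightedMeasure c := by
  refine withDensity_absolutelyContinuous' (w_meas c).aemeasurable ?_
  exact Eventually.of_forall fun x => (ENNReal.ofReal_pos.mpr (Real.exp_pos _)).ne'

lemma ac_vol : (weightedMeasure c : Measure ℝ) ≪ (volume : Measure ℝ) :=
  withDensity_absolutelyContinuous _ _

/-- a.e. equality (w.r.t. the weighted measure) is preserved by translation. -/
lemma ae_translate {g g' : ℝ → ℂ} (h : ℝ) (hgg : g =ᵐ[weightedMeasure c] g') :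
    (fun t => g (t - h)) =ᵐ[weightedMeasure c] fun t => g' (t - h) := by
  have h1 : g =ᵐ[volume] g' := hgg.filter_mono vol_ac.ae_le
  have hmp : MeasurePreserving (fun t : ℝ => t - h) (volume : Measure ℝ) volume := by
    have := measurePreserving_add_right (volume : Measure ℝ) (-h)
    simpa [sub_eq_add_neg] using this
  have h2 := hmp.quasiMeasurePreserving.ae_eq_comp h1
  exact (h2 : (fun t => g (t - h)) =ᵐ[volume] fun t => g' (t - h)).filter_mono ac_vol.ae_le

variable (T : ℝ → Lp ℂ 2 (weightedMeasure c) →L[ℂ] Lp ℂ 2 (weightedMeasure c))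
variable (hT : ∀ (h : ℝ) (f : Lp ℂ 2 (weightedMeasure c)),
    (T h f : ℝ → ℂ) =ᵐ[weightedMeasure c] fun t => f (t - h))

include hT

lemma norm_apply (h : ℝ) (f : Lp ℂ 2 (weightedMeasure c)) :
    ‖T h f‖ ≤ Real.exp (-(c * h)) * ‖f‖ := by
  have e1 : eLpNorm (T h f : ℝ → ℂ) 2 (weightedMeasure c) = eLpNorm (fun t => f (t - h)) 2 (weightedMeasure c) :=
    eLpNorm_congr_ae (hT h f)
  have hsm : AEStronglyMeasurable (f : ℝ → ℂ) (ENNReal.ofReal (Real.exp (-2 * c * h)) • weightedMeasure c) :=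
    (Lp.aestronglyMeasurable f).mono_ac (Measure.absolutelyContinuous_of_le_smul le_rfl)
  have e2 : eLpNorm (fun t => f (t - h)) 2 (weightedMeasure c) =
      eLpNorm (f : ℝ → ℂ) 2 (ENNReal.ofReal (Real.exp (-2 * c * h)) • weightedMeasure c) :=
    eLpNorm_comp_measurePreserving hsm (mp c h)
  have e3 : eLpNorm (f : ℝ → ℂ) 2 (ENNReal.ofReal (Real.exp (-2 * c * h)) • weightedMeasure c) =
      ENNReal.ofReal (Real.exp (-2 * c * h)) ^ ((1 : ℝ) / 2) * eLpNorm (f : ℝ → ℂ) 2 (weightedMeasure c) := by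
    rw [eLpNorm_smul_measure_of_ne_zero (ENNReal.ofReal_pos.mpr (Real.exp_pos _)).ne']
    norm_num [smul_eq_mul]
  have e4 : ENNReal.ofReal (Real.exp (-2 * c * h)) ^ ((1 : ℝ) / 2) =
      ENNReal.ofReal (Real.exp (-(c * h))) := by
    rw [ENNReal.ofReal_rpow_of_pos (Real.exp_pos _),
      Real.rpow_def_of_pos (Real.exp_pos _), Real.log_exp]
    ring_nf
  rw [Lp.norm_def, Lp.norm_def, e1, e2, e3, e4, ENNReal.toReal_mul,
    ENNReal.toReal_ofReal (Real.exp_pos _).le]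

lemma opnorm_le (h : ℝ) : ‖T h‖ ≤ Real.exp (-(c * h)) :=
  ContinuousLinearMap.opNorm_le_bound _ (Real.exp_pos _).le (norm_apply T hT h)

lemma T_zero : T 0 = 1 := by
  ext f
  refine (hT 0 f).trans ?_
  simp only [sub_zero, ContinuousLinearMap.one_apply]
  exact Eventually.of_forall fun t => rfl

lemma T_mul (a b : ℝ) : T a * T b = T (a + b) := by
  ext f
  have hmul : (T a * T b) f = T a (T b f) := ContinuousLinearMap.mul_apply _ _ _
  rw [hmul]
  have h1 := hT a (T b f)
  have h2 := ae_translate (c := c) a (hT b f)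
  have h3 := hT (a + b) f
  refine (h1.trans (h2.trans ?_)).trans h3.symm
  refine Eventually.of_forall fun t => ?_
  simp [sub_sub]

end SpectralAux

section Conv

/-- Dirichlet-convolution formula for products of absolutely convergent series
in a complete normed ring. -/
lemma hasSum_dirichlet {E : Type*} [NormedRing E] [CompleteSpace E]
    (f g : ℕ → E) (hf0 : f 0 = 0) (hg0 : g 0 = 0)
    (hf : Summable fun n => ‖f n‖) (hg : Summable fun n => ‖g n‖) :
    HasSum (fun n : ℕ => ∑ p ∈ n.divisorsAntidiagonal, f p.1 * g p.2)
      ((∑' n : ℕ, f n) * (∑' n : ℕ, g n)) := by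
  have hsum := summable_mul_of_summable_norm hf hg
  have H := (HasSum.mul hf.of_norm.hasSum hg.of_norm.hasSum hsum).tsum_fiberwise
    (fun p : ℕ × ℕ => p.1 * p.2)
  have heq : ∀ n : ℕ, (∑' (b : ((fun p : ℕ × ℕ => p.1 * p.2) ⁻¹' {n})), f b.val.1 * g b.val.2)
      = ∑ p ∈ n.divisorsAntidiagonal, f p.1 * g p.2 := by
    intro n
    rcases eq_or_ne n 0 with rfl | hn
    · rw [Nat.divisorsAntidiagonal_zero, Finset.sum_empty]
      have : ∀ b : ((fun p : ℕ × ℕ => p.1 * p.2) ⁻¹' {0}), f b.val.1 * g b.val.2 = 0 := by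
        rintro ⟨⟨p₁, p₂⟩, hp⟩
        have : p₁ * p₂ = 0 := hp
        rcases Nat.mul_eq_zero.mp this with rfl | rfl
        · rw [hf0, zero_mul]
        · rw [hg0, mul_zero]
      simp only [this, tsum_zero]
    · rw [show (fun p : ℕ × ℕ => p.1 * p.2) ⁻¹' {n} = ↑n.divisorsAntidiagonal by
        ext p; simp [Nat.mem_divisorsAntidiagonal, hn],
        Finset.tsum_subtype' n.divisorsAntidiagonal fun p => f p.1 * g p.2]
  have : (fun n : ℕ => ∑ p ∈ n.divisorsAntidiagonal, f p.1 * g p.2)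
      = fun n : ℕ => ∑' (b : ((fun p : ℕ × ℕ => p.1 * p.2) ⁻¹' {n})), f b.val.1 * g b.val.2 :=
    funext fun n => (heq n).symm
  rw [this]
  exact H

end Conv

/-- **Invertibility of the spectral operator for `c > 1`** (§4(c), item (3)): given the
translation operators `T_h` on `H_c` (characterized by `(T_h f)(t) = f(t − h)` a.e.),
the series `B = ∑_{n≥1} μ(n) T_{log n}` (with `μ` the Möbius function) converges
absolutely in operator norm and is a two-sided inverse of `A = ∑_{n≥1} T_{log n}`. -/
theorem spectral_operator_inverse_moebius (c : ℝ) (hc : 1 < c)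
    (T : ℝ → Lp ℂ 2 (weightedMeasure c) →L[ℂ] Lp ℂ 2 (weightedMeasure c))
    (hT : ∀ (h : ℝ) (f : Lp ℂ 2 (weightedMeasure c)),
      (T h f : ℝ → ℂ) =ᵐ[weightedMeasure c] fun t => f (t - h)) :
    Summable (fun n : ℕ =>
      ‖((ArithmeticFunction.moebius (n + 1) : ℤ) : ℂ) • T (Real.log (n + 1))‖) ∧
    Summable (fun n : ℕ =>
      ((ArithmeticFunction.moebius (n + 1) : ℤ) : ℂ) • T (Real.log (n + 1))) ∧
    Summable (fun n : ℕ => T (Real.log (n + 1))) ∧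
    (∑' n : ℕ, T (Real.log (n + 1))) *
      (∑' n : ℕ, ((ArithmeticFunction.moebius (n + 1) : ℤ) : ℂ) • T (Real.log (n + 1))) = 1 ∧
    (∑' n : ℕ, ((ArithmeticFunction.moebius (n + 1) : ℤ) : ℂ) • T (Real.log (n + 1))) *
      (∑' n : ℕ, T (Real.log (n + 1))) = 1 := by
  classical
  -- the extended sequences, with value `0` at `n = 0`
  set f : ℕ → (Lp ℂ 2 (weightedMeasure c) →L[ℂ] Lp ℂ 2 (weightedMeasure c)) := fun n => if n = 0 then 0 else T (Real.log n) with hf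
  set g : ℕ → (Lp ℂ 2 (weightedMeasure c) →L[ℂ] Lp ℂ 2 (weightedMeasure c)) := fun n => if n = 0 then 0
    else ((ArithmeticFunction.moebius n : ℤ) : ℂ) • T (Real.log n) with hg
  have hf0 : f 0 = 0 := by simp [hf]
  have hg0 : g 0 = 0 := by simp [hg]
  have hfs : ∀ n : ℕ, f (n + 1) = T (Real.log (n + 1)) := by
    intro n; simp [hf, Nat.succ_ne_zero]
  have hgs : ∀ n : ℕ, g (n + 1) =
      ((ArithmeticFunction.moebius (n + 1) : ℤ) : ℂ) • T (Real.log (n + 1)) := by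
    intro n; simp [hg, Nat.succ_ne_zero]
  -- norm bounds
  have hTnorm : ∀ n : ℕ, n ≠ 0 → ‖T (Real.log n)‖ ≤ ((n : ℝ) ^ c)⁻¹ := by
    intro n hn
    have hpos : (0 : ℝ) < n := by exact_mod_cast Nat.pos_of_ne_zero hn
    have h1 := SpectralAux.opnorm_le T hT (Real.log n)
    have h2 : Real.exp (-(c * Real.log n)) = ((n : ℝ) ^ c)⁻¹ := by
      rw [← Real.rpow_neg hpos.le, Real.rpow_def_of_pos hpos]
      congr 1
      ring
    calc ‖T (Real.log n)‖ ≤ Real.exp (-(c * Real.log n)) := h1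
      _ = ((n : ℝ) ^ c)⁻¹ := h2

  have hfnorm : Summable fun n => ‖f n‖ := by
    have hmaj : Summable fun n : ℕ => ((n : ℝ) ^ c)⁻¹ := Real.summable_nat_rpow_inv.mpr hc
    refine hmaj.of_nonneg_of_le (fun n => norm_nonneg _) fun n => ?_
    rcases eq_or_ne n 0 with rfl | hn
    · rw [hf0, norm_zero]; positivity
    · show ‖(if n = 0 then 0 else T (Real.log n) )‖ ≤ _
      rw [if_neg hn]
      exact hTnorm n hn
  have hmoebius_le : ∀ n : ℕ, ‖((ArithmeticFunction.moebius n : ℤ) : ℂ)‖ ≤ 1 := by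
    intro n
    rw [Complex.norm_intCast]
    exact_mod_cast ArithmeticFunction.abs_moebius_le_one
  have hgnorm : Summable fun n => ‖g n‖ := by
    have hmaj : Summable fun n : ℕ => ((n : ℝ) ^ c)⁻¹ := Real.summable_nat_rpow_inv.mpr hc
    refine hmaj.of_nonneg_of_le (fun n => norm_nonneg _) fun n => ?_
    rcases eq_or_ne n 0 with rfl | hn
    · rw [hg0, norm_zero]; positivity
    · show ‖(if n = 0 then 0
        else ((ArithmeticFunction.moebius n : ℤ) : ℂ) • T (Real.log n) )‖ ≤ _
      rw [if_neg hn, norm_smul ((ArithmeticFunction.moebius n : ℤ) : ℂ) (T (Real.log n))]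
      calc ‖((ArithmeticFunction.moebius n : ℤ) : ℂ)‖ * ‖T (Real.log n)‖
          ≤ 1 * ((n : ℝ) ^ c)⁻¹ :=
            mul_le_mul (hmoebius_le n) (hTnorm n hn) (norm_nonneg _) zero_le_one
        _ = ((n : ℝ) ^ c)⁻¹ := one_mul _
  -- the three summability statements
  have sum1 : Summable (fun n : ℕ =>
      ‖((ArithmeticFunction.moebius (n + 1) : ℤ) : ℂ) • T (Real.log (n + 1))‖) := by
    refine (hgnorm.comp_injective Nat.succ_injective).congr fun n => ?_
    simp only [Function.comp_apply, hgs n]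
  have sum3 : Summable (fun n : ℕ => ‖T (Real.log (n + 1))‖) := by
    refine (hfnorm.comp_injective Nat.succ_injective).congr fun n => ?_
    simp only [Function.comp_apply, hfs n]
  -- tsum identifications
  have hAt : (∑' n : ℕ, T (Real.log (n + 1))) = ∑' n, f n := by
    rw [Summable.tsum_eq_zero_add hfnorm.of_norm, hf0, zero_add]
    exact tsum_congr fun n => (hfs n).symm
  have hBt : (∑' n : ℕ, ((ArithmeticFunction.moebius (n + 1) : ℤ) : ℂ) •
      T (Real.log (n + 1))) = ∑' n, g n := by
    rw [Summable.tsum_eq_zero_add hgnorm.of_norm, hg0, zero_add]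
    exact tsum_congr fun n => (hgs n).symm
  -- sum of moebius over divisors
  have hmoeb_right : ∀ n : ℕ, n ≠ 0 →
      (∑ p ∈ n.divisorsAntidiagonal, ((ArithmeticFunction.moebius p.2 : ℤ) : ℂ))
        = if n = 1 then 1 else 0 := by
    intro n hn
    have hz := congrArg (fun F : ArithmeticFunction ℤ => F n)
      ArithmeticFunction.coe_zeta_mul_moebius
    simp only [ArithmeticFunction.mul_apply, ArithmeticFunction.one_apply] at hz
    have hz' : (∑ p ∈ n.divisorsAntidiagonal, ArithmeticFunction.moebius p.2 : ℤ)
        = if n = 1 then 1 else 0 := by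
      rw [← hz]
      refine Finset.sum_congr rfl fun p hp => ?_
      obtain ⟨h1, _⟩ := Nat.ne_zero_of_mem_divisorsAntidiagonal hp
      simp [ArithmeticFunction.natCoe_apply, ArithmeticFunction.zeta_apply_ne h1]
    calc (∑ p ∈ n.divisorsAntidiagonal, ((ArithmeticFunction.moebius p.2 : ℤ) : ℂ))
        = ((∑ p ∈ n.divisorsAntidiagonal, ArithmeticFunction.moebius p.2 : ℤ) : ℂ) := by
          push_cast; rfl
      _ = _ := by rw [hz']; split <;> simp
  have hmoeb_left : ∀ n : ℕ, n ≠ 0 →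
      (∑ p ∈ n.divisorsAntidiagonal, ((ArithmeticFunction.moebius p.1 : ℤ) : ℂ))
        = if n = 1 then 1 else 0 := by
    intro n hn
    have hz := congrArg (fun F : ArithmeticFunction ℤ => F n)
      ArithmeticFunction.moebius_mul_coe_zeta
    simp only [ArithmeticFunction.mul_apply, ArithmeticFunction.one_apply] at hz
    have hz' : (∑ p ∈ n.divisorsAntidiagonal, ArithmeticFunction.moebius p.1 : ℤ)
        = if n = 1 then 1 else 0 := by
      rw [← hz]
      refine Finset.sum_congr rfl fun p hp => ?_
      obtain ⟨_, h2⟩ := Nat.ne_zero_of_mem_divisorsAntidiagonal hp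
      simp [ArithmeticFunction.natCoe_apply, ArithmeticFunction.zeta_apply_ne h2]
    calc (∑ p ∈ n.divisorsAntidiagonal, ((ArithmeticFunction.moebius p.1 : ℤ) : ℂ))
        = ((∑ p ∈ n.divisorsAntidiagonal, ArithmeticFunction.moebius p.1 : ℤ) : ℂ) := by
          push_cast; rfl
      _ = _ := by rw [hz']; split <;> simp
  have hstep : ∀ (n : ℕ), n ≠ 0 → ∀ p ∈ n.divisorsAntidiagonal,
      T (Real.log p.1) * T (Real.log p.2) = T (Real.log n) := by
    intro n hn p hp
    obtain ⟨h1, h2⟩ := Nat.ne_zero_of_mem_divisorsAntidiagonal hp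
    have hmul : p.1 * p.2 = n := (Nat.mem_divisorsAntidiagonal.mp hp).1
    rw [SpectralAux.T_mul T hT, ← Real.log_mul (by exact_mod_cast h1) (by exact_mod_cast h2),
      ← Nat.cast_mul, hmul]
  have hone : T (Real.log (1 : ℕ)) = 1 := by
    rw [Nat.cast_one, Real.log_one, SpectralAux.T_zero T hT]
  have hAB : (∑' n, f n) * (∑' n, g n) = 1 := by
    have H := hasSum_dirichlet f g hf0 hg0 hfnorm hgnorm
    have hS : (fun n => ∑ p ∈ n.divisorsAntidiagonal, f p.1 * g p.2)
        = fun n => if n = 1 then (1 : Lp ℂ 2 (weightedMeasure c) →L[ℂ] Lp ℂ 2 (weightedMeasure c)) else 0 := by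
      funext n
      rcases eq_or_ne n 0 with rfl | hn
      · rw [Nat.divisorsAntidiagonal_zero, Finset.sum_empty, if_neg (by norm_num)]
      · have step : ∀ p ∈ n.divisorsAntidiagonal, f p.1 * g p.2 =
            ((ArithmeticFunction.moebius p.2 : ℤ) : ℂ) • T (Real.log n) := by
          intro p hp
          obtain ⟨h1, h2⟩ := Nat.ne_zero_of_mem_divisorsAntidiagonal hp
          show (if p.1 = 0 then 0 else T (Real.log p.1)) *
            (if p.2 = 0 then 0
              else ((ArithmeticFunction.moebius p.2 : ℤ) : ℂ) • T (Real.log p.2)) = _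
          rw [if_neg h1, if_neg h2, mul_smul_comm, hstep n hn p hp]
        rw [Finset.sum_congr rfl step, ← Finset.sum_smul, hmoeb_right n hn]
        split
        · next h => subst h; rw [one_smul]; exact_mod_cast hone
        · rw [zero_smul]
    rw [hS] at H
    exact H.unique (hasSum_ite_eq 1 (1 : Lp ℂ 2 (weightedMeasure c) →L[ℂ] Lp ℂ 2 (weightedMeasure c)))
  have hBA : (∑' n, g n) * (∑' n, f n) = 1 := by
    have H := hasSum_dirichlet g f hg0 hf0 hgnorm hfnorm
    have hS : (fun n => ∑ p ∈ n.divisorsAntidiagonal, g p.1 * f p.2)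
        = fun n => if n = 1 then (1 : Lp ℂ 2 (weightedMeasure c) →L[ℂ] Lp ℂ 2 (weightedMeasure c)) else 0 := by
      funext n
      rcases eq_or_ne n 0 with rfl | hn
      · rw [Nat.divisorsAntidiagonal_zero, Finset.sum_empty, if_neg (by norm_num)]
      · have step : ∀ p ∈ n.divisorsAntidiagonal, g p.1 * f p.2 =
            ((ArithmeticFunction.moebius p.1 : ℤ) : ℂ) • T (Real.log n) := by
          intro p hp
          obtain ⟨h1, h2⟩ := Nat.ne_zero_of_mem_divisorsAntidiagonal hp
          show (if p.1 = 0 then 0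
              else ((ArithmeticFunction.moebius p.1 : ℤ) : ℂ) • T (Real.log p.1)) *
            (if p.2 = 0 then 0 else T (Real.log p.2)) = _
          rw [if_neg h1, if_neg h2, smul_mul_assoc, hstep n hn p hp]
        rw [Finset.sum_congr rfl step, ← Finset.sum_smul, hmoeb_left n hn]
        split
        · next h => subst h; rw [one_smul]; exact_mod_cast hone
        · rw [zero_smul]
    rw [hS] at H
    exact H.unique (hasSum_ite_eq 1 (1 : Lp ℂ 2 (weightedMeasure c) →L[ℂ] Lp ℂ 2 (weightedMeasure c)))
  refine ⟨sum1, sum1.of_norm, sum3.of_norm, ?_, ?_⟩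
  · rw [hAt, hBt]; exact hAB
  · rw [hAt, hBt]; exact hBA
end

section
/- Let ℓ be a fractal string and suppose its abscissa of convergence D := inf{α > 0 : ∑_{j=1}^∞ ℓ_j^α < ∞} satisfies 0 < D < 1. Then D coincides with the Minkowski dimension of the string defined via tube volumes: for every d ∈ (0, 1) with d < D one has limsup_{ε→0⁺} V(ε)/ε^{1−d} = +∞, and for every d ∈ (0, 1) with d > D one has lim_{ε→0⁺} V(ε)/ε^{1−d} = 0; consequently D = inf{d ∈ (0,1) : limsup_{ε→0⁺} V(ε)/ε^{1−d} < ∞}. -/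
/-!
Both halves compare the tube volume `V(ε)` with the series `∑ ℓ_j^α`. For `α ≤ 1` one has
`min(ℓ, 2ε) ≤ (2ε)^{1-α} ℓ^α`, so a convergent `∑ ℓ_j^α` gives `V(ε) = O(ε^{1-α})`.
Conversely, the first `j + 1` lengths are all at least `ℓ_j`, so `(j + 1) ℓ_j ≤ V(ℓ_j / 2)`;
a bound `V(ε) ≤ C ε^{1-d}` therefore forces `ℓ_j^d = O(1/j)`, and `∑ ℓ_j^α` converges for
every `α > d` by comparison with a `p`-series.
-/

open Filter Topology Asymptotics

theorem min_le_rpow_mul_rpow {a c α : ℝ} (ha : 0 ≤ a) (hc : 0 ≤ c) (hα0 : 0 ≤ α) (hα1 : α ≤ 1) :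
    min a c ≤ c ^ (1 - α) * a ^ α := by
  have hm : 0 ≤ min a c := le_min ha hc
  calc min a c = min a c ^ (1 - α) * min a c ^ α := by
        rw [← Real.rpow_add' hm (by norm_num), sub_add_cancel, Real.rpow_one]
    _ ≤ c ^ (1 - α) * a ^ α :=
        mul_le_mul (Real.rpow_le_rpow hm (min_le_right a c) (by linarith))
          (Real.rpow_le_rpow hm (min_le_left a c) hα0) (by positivity) (by positivity)

theorem summable_rpow_of_rpow_isBigO_inv {u : ℕ → ℝ} (hu : ∀ j, 0 ≤ u j) {d α : ℝ}
    (hd : 0 < d) (hdα : d < α) (hO : (fun j => u j ^ d) =O[atTop] fun j => (j : ℝ)⁻¹) :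
    Summable fun j => u j ^ α := by
  have hq : 0 < α / d := div_pos (hd.trans hdα) hd
  have hl : (fun j => u j ^ α) = fun j => (u j ^ d) ^ (α / d) :=
    funext fun j => by rw [← Real.rpow_mul (hu j), mul_div_cancel₀ α hd.ne']
  have hr : (fun j : ℕ => ((j : ℝ) ^ (α / d))⁻¹) = fun j : ℕ => ((j : ℝ)⁻¹) ^ (α / d) :=
    funext fun j => (Real.inv_rpow (Nat.cast_nonneg j) _).symm
  have hp : Summable fun j : ℕ => ((j : ℝ)⁻¹) ^ (α / d) :=
    hr ▸ Real.summable_nat_rpow_inv.2 ((one_lt_div hd).2 hdα)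
  rw [hl]
  exact summable_of_isBigO_nat' hp
    (hO.rpow hq.le (Eventually.of_forall fun j => inv_nonneg.2 (Nat.cast_nonneg j)))

theorem exists_eventually_le_of_limsup_ofReal_ne_top {ι : Type*} {l : Filter ι} {f : ι → ℝ}
    (h : limsup (fun x => ENNReal.ofReal (f x)) l ≠ ⊤) : ∃ C, ∀ᶠ x in l, f x ≤ C := by
  obtain ⟨b, hlt, hb⟩ := exists_between (lt_top_iff_ne_top.2 h)
  exact ⟨b.toReal, (eventually_lt_of_limsup_lt hlt).mono fun x hx =>
    (ENNReal.ofReal_le_iff_le_toReal hb.ne).1 hx.le⟩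

theorem csInf_eq_of_Ioo_subset_of_subset_Ici {α : Type*} [ConditionallyCompleteLinearOrder α]
    [DenselyOrdered α] {s : Set α} {a b : α} (hab : a < b) (hIoo : Set.Ioo a b ⊆ s)
    (hIci : s ⊆ Set.Ici a) : sInf s = a :=
  IsGLB.csInf_eq ⟨fun _ hx => hIci hx, fun _ hx => (isGLB_Ioo hab).2 (lowerBounds_mono_set hIoo hx)⟩
    ((Set.nonempty_Ioo.2 hab).mono hIoo)

namespace FractalString

noncomputable def tubeVolume (ℓ : ℕ → ℝ) (ε : ℝ) : ℝ := ∑' j, min (ℓ j) (2 * ε)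

variable {ℓ : ℕ → ℝ}

theorem tubeVolume_le_rpow_mul_tsum (hℓ : ∀ j, 0 ≤ ℓ j) {α : ℝ} (hα0 : 0 ≤ α) (hα1 : α ≤ 1)
    (hα : Summable fun j => ℓ j ^ α) {ε : ℝ} (hε : 0 ≤ ε) :
    tubeVolume ℓ ε ≤ (2 * ε) ^ (1 - α) * ∑' j, ℓ j ^ α := by
  have hbound : ∀ j, min (ℓ j) (2 * ε) ≤ (2 * ε) ^ (1 - α) * ℓ j ^ α :=
    fun j => min_le_rpow_mul_rpow (hℓ j) (by positivity) hα0 hα1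
  rw [tubeVolume, ← tsum_mul_left]
  exact ((hα.mul_left _).of_nonneg_of_le (fun j => le_min (hℓ j) (by positivity)) hbound).tsum_le_tsum
    hbound (hα.mul_left _)

theorem succ_mul_le_tubeVolume_half (hℓ : ∀ j, 0 ≤ ℓ j) (hmono : Antitone ℓ) (hsum : Summable ℓ)
    (j : ℕ) : (j + 1 : ℝ) * ℓ j ≤ tubeVolume ℓ (ℓ j / 2) := by
  have hnn : ∀ k, 0 ≤ min (ℓ k) (ℓ j) := fun k => le_min (hℓ k) (hℓ j)
  rw [tubeVolume, mul_div_cancel₀ (ℓ j) two_ne_zero]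
  calc (j + 1 : ℝ) * ℓ j = ∑ k ∈ Finset.range (j + 1), min (ℓ k) (ℓ j) := by
        rw [Finset.sum_congr rfl fun k hk => min_eq_right (hmono (Finset.mem_range_succ_iff.1 hk))]
        simp
    _ ≤ ∑' k, min (ℓ k) (ℓ j) :=
        (hsum.of_nonneg_of_le hnn fun k => min_le_left _ _).sum_le_tsum _ fun k _ => hnn k

theorem rpow_isBigO_inv_of_tubeVolume_le (hℓ : ∀ j, 0 < ℓ j) (hmono : Antitone ℓ)
    (hsum : Summable ℓ) {d C : ℝ} (hV : ∀ᶠ ε in 𝓝[>] 0, tubeVolume ℓ ε ≤ C * ε ^ (1 - d)) :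
    (fun j => ℓ j ^ d) =O[atTop] fun j => (j : ℝ)⁻¹ := by
  have hhalf : Tendsto (fun j => ℓ j / 2) atTop (𝓝[>] 0) :=
    tendsto_nhdsWithin_iff.2 ⟨by simpa using hsum.tendsto_atTop_zero.div_const 2,
      Eventually.of_forall fun j => half_pos (hℓ j)⟩
  refine IsBigO.of_bound (C / 2 ^ (1 - d)) ?_
  filter_upwards [hhalf.eventually hV, eventually_gt_atTop 0] with j hj hj0
  have hbound : ℓ j ^ d * j * ℓ j ^ (1 - d) ≤ C / 2 ^ (1 - d) * ℓ j ^ (1 - d) :=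
    calc ℓ j ^ d * j * ℓ j ^ (1 - d) = j * ℓ j := by
          rw [mul_right_comm, ← Real.rpow_add (hℓ j), add_sub_cancel, Real.rpow_one, mul_comm]
      _ ≤ (j + 1 : ℝ) * ℓ j := by linarith [hℓ j]
      _ ≤ tubeVolume ℓ (ℓ j / 2) := succ_mul_le_tubeVolume_half (fun k => (hℓ k).le) hmono hsum j
      _ ≤ C * (ℓ j / 2) ^ (1 - d) := hj
      _ = C / 2 ^ (1 - d) * ℓ j ^ (1 - d) := by
        rw [Real.div_rpow (hℓ j).le zero_le_two]; ring
  rw [Real.norm_of_nonneg (Real.rpow_nonneg (hℓ j).le d), Real.norm_of_nonneg (by positivity),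
    ← div_eq_mul_inv, le_div_iff₀ (Nat.cast_pos.2 hj0)]
  exact le_of_mul_le_mul_right hbound (Real.rpow_pos_of_pos (hℓ j) _)

theorem summable_rpow_of_limsup_tubeVolume_div_rpow_ne_top (hℓ : ∀ j, 0 < ℓ j)
    (hmono : Antitone ℓ) (hsum : Summable ℓ) {d α : ℝ} (hd : 0 < d) (hdα : d < α)
    (h : limsup (fun ε => ENNReal.ofReal (tubeVolume ℓ ε / ε ^ (1 - d))) (𝓝[>] 0) ≠ ⊤) :
    Summable fun j => ℓ j ^ α := by
  obtain ⟨C, hC⟩ := exists_eventually_le_of_limsup_ofReal_ne_top h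
  have hV : ∀ᶠ ε in 𝓝[>] 0, tubeVolume ℓ ε ≤ C * ε ^ (1 - d) := by
    filter_upwards [hC, self_mem_nhdsWithin] with ε hε (hε0 : 0 < ε)
    exact (div_le_iff₀ (Real.rpow_pos_of_pos hε0 _)).1 hε
  exact summable_rpow_of_rpow_isBigO_inv (fun j => (hℓ j).le) hd hdα
    (rpow_isBigO_inv_of_tubeVolume_le hℓ hmono hsum hV)

theorem tendsto_tubeVolume_div_rpow_zero (hℓ : ∀ j, 0 ≤ ℓ j) {β d : ℝ} (hβ0 : 0 ≤ β)
    (hβd : β < d) (hβ1 : β ≤ 1) (hβ : Summable fun j => ℓ j ^ β) :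
    Tendsto (fun ε => tubeVolume ℓ ε / ε ^ (1 - d)) (𝓝[>] 0) (𝓝 0) := by
  set c := 2 ^ (1 - β) * ∑' j, ℓ j ^ β
  have hlim : Tendsto (fun ε : ℝ => c * ε ^ (d - β)) (𝓝[>] 0) (𝓝 0) := by
    have hcont := Real.continuousAt_rpow_const 0 (d - β) (Or.inr (sub_pos.2 hβd).le)
    simpa [Real.zero_rpow (sub_pos.2 hβd).ne'] using
      (hcont.tendsto.mono_left nhdsWithin_le_nhds).const_mul c
  refine squeeze_zero' ?_ ?_ hlim
  · filter_upwards [self_mem_nhdsWithin] with ε (hε : 0 < ε)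
    exact div_nonneg (tsum_nonneg fun j => le_min (hℓ j) (by positivity)) (by positivity)
  · filter_upwards [self_mem_nhdsWithin] with ε (hε : 0 < ε)
    rw [div_le_iff₀ (Real.rpow_pos_of_pos hε _)]
    calc tubeVolume ℓ ε ≤ (2 * ε) ^ (1 - β) * ∑' j, ℓ j ^ β :=
          tubeVolume_le_rpow_mul_tsum hℓ hβ0 hβ1 hβ hε.le
      _ = c * ε ^ (d - β) * ε ^ (1 - d) := by
        rw [mul_assoc c, ← Real.rpow_add hε, show d - β + (1 - d) = 1 - β by ring,
          Real.mul_rpow zero_le_two hε.le]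
        ring

end FractalString

open FractalString in
/-- **The abscissa of convergence equals the Minkowski dimension** (Lapidus; §2(a)):
for a fractal string `ℓ` with abscissa of convergence `D ∈ (0,1)`, the tube volume
`V(ε) = ∑_j min(ℓ_j, 2ε)` satisfies `limsup_{ε→0⁺} V(ε)/ε^{1−d} = ∞` for `d < D` and
`lim_{ε→0⁺} V(ε)/ε^{1−d} = 0` for `d > D` (`d ∈ (0,1)`); consequently `D` is the infimum
of the `d ∈ (0,1)` with finite upper `d`-dimensional Minkowski content. -/
theorem abscissa_eq_minkowski_dimension
    (D : ℝ) (hD : D ∈ Set.Ioo (0 : ℝ) 1) (ℓ : ℕ → ℝ)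
    (hpos : ∀ j, 0 < ℓ j) (hmono : Antitone ℓ) (hsum : Summable ℓ)
    (habs : D = sInf {α : ℝ | 0 < α ∧ Summable fun j => ℓ j ^ α}) :
    (∀ d : ℝ, d ∈ Set.Ioo (0 : ℝ) 1 → d < D →
      Filter.limsup
        (fun ε : ℝ => ENNReal.ofReal ((∑' j, min (ℓ j) (2 * ε)) / ε ^ (1 - d)))
        (nhdsWithin 0 (Set.Ioi 0)) = ⊤) ∧
    (∀ d : ℝ, d ∈ Set.Ioo (0 : ℝ) 1 → D < d →
      Tendsto (fun ε : ℝ => (∑' j, min (ℓ j) (2 * ε)) / ε ^ (1 - d))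
        (nhdsWithin 0 (Set.Ioi 0)) (𝓝 0)) ∧
    D = sInf {d : ℝ | d ∈ Set.Ioo (0 : ℝ) 1 ∧
      Filter.limsup
        (fun ε : ℝ => ENNReal.ofReal ((∑' j, min (ℓ j) (2 * ε)) / ε ^ (1 - d)))
        (nhdsWithin 0 (Set.Ioi 0)) < ⊤} := by
  set A := {α : ℝ | 0 < α ∧ Summable fun j => ℓ j ^ α}
  have hA : A.Nonempty := by
    by_contra h
    rw [Set.not_nonempty_iff_eq_empty.1 h, Real.sInf_empty] at habs
    exact hD.1.ne' habs
  have below : ∀ d ∈ Set.Ioo (0 : ℝ) 1, d < D →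
      limsup (fun ε => ENNReal.ofReal (tubeVolume ℓ ε / ε ^ (1 - d))) (𝓝[>] 0) = ⊤ := by
    intro d hd hdD
    by_contra h
    have hmid := summable_rpow_of_limsup_tubeVolume_div_rpow_ne_top hpos hmono hsum hd.1
      (α := (d + D) / 2) (by linarith) h
    have hle : sInf A ≤ (d + D) / 2 :=
      csInf_le ⟨0, fun α (hα : α ∈ A) => hα.1.le⟩ ⟨by linarith [hd.1], hmid⟩
    linarith
  have above : ∀ d ∈ Set.Ioo (0 : ℝ) 1, D < d →
      Tendsto (fun ε => tubeVolume ℓ ε / ε ^ (1 - d)) (𝓝[>] 0) (𝓝 0) := by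
    intro d hd hDd
    obtain ⟨β, ⟨hβ0, hβ⟩, hβd⟩ := exists_lt_of_csInf_lt hA (habs ▸ hDd)
    exact tendsto_tubeVolume_div_rpow_zero (fun j => (hpos j).le) hβ0.le hβd (by linarith [hd.2]) hβ
  refine ⟨below, above, (csInf_eq_of_Ioo_subset_of_subset_Ici hD.2 ?_ ?_).symm⟩
  · intro d hd
    have hd' : d ∈ Set.Ioo (0 : ℝ) 1 := ⟨hD.1.trans hd.1, hd.2⟩
    exact ⟨hd', lt_of_eq_of_lt (ENNReal.tendsto_ofReal (above d hd' hd.1)).limsup_eq (by simp)⟩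
  · rintro d ⟨hd, hfin⟩
    by_contra hdD
    exact hfin.ne (below d hd (not_le.1 hdD))
end
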